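/- Let n ≥ 2, δ ∈ (0,n], μ ∈ [0,1), p ∈ (δ/n, δ), and s ∈ (p(δ−μp)/(δ−p), ∞), and let Ω := B(0,1) \ {0} ⊂ ℝⁿ. Then for every η ∈ ℝ with 1 − δ/p < η ≤ −(δ−μp)/s (and such η exist since 1 − δ/p < −(δ−μp)/s), the function u₀(x) := |x|^η on Ω belongs to C¹(Ω) and satisfies: (a) for every b ∈ ℝ and every q ∈ (0,∞), ‖u₀ − b‖_{L^{s,q}(Ω, H_∞^{δ−μp})} = ∞; and (b) for every q̃ ∈ (0,∞), ‖∇u₀‖_{L^{p,q̃}(Ω, H_∞^{δ})} < ∞. In particular, the exponent p(δ−μp)/(δ−p) in the Poincaré–Sobolev inequality on Choquet–Lorentz integrals over bounded John domains cannot be replaced by any larger exponent s. -/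

import Mathlib

open Metric Set MeasureTheory Filter
open scoped ENNReal NNReal Topology

/-- The Hausdorff content of dimension `δ` of a set `K ⊆ ℝⁿ`. -/
noncomputable def hausdorffContent (n : ℕ) (δ : ℝ)
    (K : Set (EuclideanSpace ℝ (Fin n))) : ℝ≥0∞ :=
  ⨅ (c : ℕ → EuclideanSpace ℝ (Fin n) × ℝ≥0)
    (_ : K ⊆ ⋃ i, Metric.ball (c i).1 ((c i).2 : ℝ)),
    ∑' i, ((c i).2 : ℝ≥0∞) ^ δ

/-- The Lorentz quasinorm `‖f‖_{L^{p,q}(E, μC)}` (for finite `q`) with respect to a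
set function (content) `μC`. -/
noncomputable def lorNorm {X : Type*} (μC : Set X → ℝ≥0∞) (p q : ℝ)
    (E : Set X) (f : X → ℝ≥0∞) : ℝ≥0∞ :=
  (ENNReal.ofReal p * ∫⁻ t in Set.Ioi (0 : ℝ),
      ENNReal.ofReal (t ^ q) * μC {x ∈ E | ENNReal.ofReal t < f x} ^ (q / p)
        * ENNReal.ofReal t⁻¹) ^ (1 / q)

/-- The weak (`q = ∞`) Lorentz quasinorm `‖f‖_{L^{p,∞}(E, μC)}` with respect to a
set function (content) `μC`. -/
noncomputable def lorNormTop {X : Type*} (μC : Set X → ℝ≥0∞) (p : ℝ)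
    (E : Set X) (f : X → ℝ≥0∞) : ℝ≥0∞ :=
  ⨆ (t : ℝ) (_ : 0 < t), ENNReal.ofReal t * μC {x ∈ E | ENNReal.ofReal t < f x} ^ (1 / p)

/-- Interpret a real-valued function as an `ℝ≥0∞`-valued one via `|·|`. -/
noncomputable def ofRealFun {X : Type*} (f : X → ℝ) : X → ℝ≥0∞ :=
  fun x => ENNReal.ofReal |f x|

/-- `Ω` is a John domain with John center `x₀` and constants `a ≤ b`: every point of `Ω`
can be joined to `x₀` by a rectifiable curve, parameterized by arc length
(encoded as a `1`-Lipschitz parameterization), of length at most `b`, staying in `Ω`,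
whose distance to the boundary at time `t` is at least `(a / b) * t`. -/
def JohnFrom {n : ℕ} (x₀ : EuclideanSpace ℝ (Fin n)) (a b : ℝ)
    (Ω : Set (EuclideanSpace ℝ (Fin n))) : Prop :=
  x₀ ∈ Ω ∧ ∀ x ∈ Ω, ∃ (L : ℝ) (γ : ℝ → EuclideanSpace ℝ (Fin n)),
    0 ≤ L ∧ L ≤ b ∧ γ 0 = x ∧ γ L = x₀ ∧
    (∀ t ∈ Set.Icc 0 L, γ t ∈ Ω) ∧
    LipschitzOnWith 1 γ (Set.Icc 0 L) ∧
    ∀ t ∈ Set.Icc 0 L, a / b * t ≤ Metric.infDist (γ t) (frontier Ω)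

/-- A bounded `(a, b)`-John domain in `ℝⁿ`. -/
def IsJohnDomain {n : ℕ} (a b : ℝ) (Ω : Set (EuclideanSpace ℝ (Fin n))) : Prop :=
  IsOpen Ω ∧ IsConnected Ω ∧ Bornology.IsBounded Ω ∧ ∃ x₀, JohnFrom x₀ a b Ω

/-- The fractional Hardy–Littlewood maximal function of order `μ`. -/
noncomputable def fracMaximal (n : ℕ) (μ : ℝ) (f : EuclideanSpace ℝ (Fin n) → ℝ)
    (x : EuclideanSpace ℝ (Fin n)) : ℝ≥0∞ :=
  ⨆ (r : ℝ) (_ : 0 < r), ENNReal.ofReal (r ^ μ) *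
    ((∫⁻ y in Metric.ball x r, ENNReal.ofReal |f y| ∂volume) / volume (Metric.ball x r))

/-- The normalizing constant `c_α = π^{n/2} 2^α Γ(α/2) / Γ((n-α)/2)` of the Riesz potential. -/
noncomputable def rieszConst (n : ℕ) (a : ℝ) : ℝ :=
  Real.pi ^ ((n : ℝ) / 2) * 2 ^ a * Real.Gamma (a / 2) / Real.Gamma (((n : ℝ) - a) / 2)

/-- The Riesz potential `I_α f (x) = c_α⁻¹ ∫ f(y) |x - y|^{α - n} dy`. -/
noncomputable def rieszPotential (n : ℕ) (a : ℝ) (f : EuclideanSpace ℝ (Fin n) → ℝ)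
    (x : EuclideanSpace ℝ (Fin n)) : ℝ :=
  (rieszConst n a)⁻¹ * ∫ y, f y * ‖x - y‖ ^ (a - (n : ℝ)) ∂volume

/-!
Near the origin `|x|^η - b` exceeds `t` on a punctured ball of radius `(t + |b|)^{1/η}`, and a
punctured ball of radius `ρ` has `H_∞^d`-content at least `ρ^d` (compare volumes and use
`∑ ρᵢⁿ ≤ (∑ ρᵢ^d)^{n/d}`). As `η s ≤ -(δ - μp)`, the integrand of the `L^{s,q}` quasinorm is then
at least a multiple of `t⁻¹` for large `t`, so the quasinorm diverges. Conversely
`|∇u₀| = |η| |x|^{η-1}` exceeds `t` only on a ball of radius `(t/|η|)^{1/(η-1)}`, whose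
`H_∞^δ`-content decays like `t^{-δ/(1-η)}` with `δ/(1-η) > p` because `η > 1 - δ/p`; together
with the bound `1` for small `t` this makes the `L^{p,q̃}` integral converge.
-/

lemma ENNReal.tsum_rpow_le_rpow_tsum {ι : Type*} (a : ι → ℝ≥0∞) {p : ℝ} (hp : 1 ≤ p) :
    ∑' i, a i ^ p ≤ (∑' i, a i) ^ p := by
  have hsplit : ∀ b : ℝ≥0∞, b ^ p = b * b ^ (p - 1) := fun b =>
    calc b ^ p = b ^ (1 + (p - 1)) := by rw [add_sub_cancel]
      _ = b * b ^ (p - 1) := by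
        rw [ENNReal.rpow_add_of_nonneg _ _ zero_le_one (by linarith), ENNReal.rpow_one]
  calc ∑' i, a i ^ p ≤ ∑' i, a i * (∑' j, a j) ^ (p - 1) := by
        gcongr with i
        rw [hsplit]
        gcongr
        exact ENNReal.le_tsum i
    _ = (∑' i, a i) ^ p := by rw [ENNReal.tsum_mul_right, ← hsplit]

lemma EuclideanSpace.nontrivial_of_pos {n : ℕ} (hn : 0 < n) :
    Nontrivial (EuclideanSpace ℝ (Fin n)) :=
  have : Nonempty (Fin n) := ⟨⟨0, hn⟩⟩
  inferInstance

section HausdorffContent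

variable {n : ℕ} {d : ℝ}

lemma hausdorffContent_mono {K K' : Set (EuclideanSpace ℝ (Fin n))} (h : K ⊆ K') :
    hausdorffContent n d K ≤ hausdorffContent n d K' :=
  le_iInf₂ fun c hc => iInf₂_le c (h.trans hc)

lemma hausdorffContent_le_of_subset_ball (hd : 0 < d) {K : Set (EuclideanSpace ℝ (Fin n))}
    {x : EuclideanSpace ℝ (Fin n)} {R : ℝ} (hK : K ⊆ ball x R) :
    hausdorffContent n d K ≤ ENNReal.ofReal R ^ d := by
  let c : ℕ → EuclideanSpace ℝ (Fin n) × ℝ≥0 := fun i => (x, if i = 0 then R.toNNReal else 0)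
  have hcov : K ⊆ ⋃ i, ball (c i).1 ((c i).2 : ℝ) :=
    hK.trans <| (ball_subset_ball (by simp [c])).trans (subset_iUnion_of_subset 0 le_rfl)
  refine (iInf₂_le c hcov).trans_eq ?_
  rw [tsum_eq_single 0 fun i hi => by simp [c, hi, ENNReal.zero_rpow_of_pos hd]]
  simp [c, ENNReal.ofReal]

lemma rpow_volume_div_le_hausdorffContent (hd : 0 < d) (hdn : d ≤ n)
    (K : Set (EuclideanSpace ℝ (Fin n))) :
    (volume K / volume (ball (0 : EuclideanSpace ℝ (Fin n)) 1)) ^ (d / n)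
      ≤ hausdorffContent n d K := by
  have hn : (0 : ℝ) < n := hd.trans_le hdn
  have := EuclideanSpace.nontrivial_of_pos (Nat.cast_pos.mp hn)
  refine le_iInf₂ fun c hc => ?_
  have hvol : volume K ≤ (∑' i, ((c i).2 : ℝ≥0∞) ^ (n : ℝ))
      * volume (ball (0 : EuclideanSpace ℝ (Fin n)) 1) :=
    calc volume K ≤ ∑' i, volume (ball (c i).1 ((c i).2 : ℝ)) :=
          (measure_mono hc).trans (measure_iUnion_le _)
      _ = _ := by
          rw [← ENNReal.tsum_mul_right]
          congr 1 with i
          rw [Measure.addHaar_ball _ _ (c i).2.coe_nonneg, finrank_euclideanSpace_fin,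
            ENNReal.ofReal_pow (c i).2.coe_nonneg, ENNReal.ofReal_coe_nnreal,
            ENNReal.rpow_natCast]
  have hsuper : ∑' i, ((c i).2 : ℝ≥0∞) ^ (n : ℝ)
      ≤ (∑' i, ((c i).2 : ℝ≥0∞) ^ d) ^ ((n : ℝ) / d) := by
    refine le_of_eq_of_le (tsum_congr fun i => ?_)
      (ENNReal.tsum_rpow_le_rpow_tsum _ ((one_le_div hd).mpr hdn))
    rw [← ENNReal.rpow_mul, mul_div_cancel₀ _ hd.ne']
  calc (volume K / volume (ball (0 : EuclideanSpace ℝ (Fin n)) 1)) ^ (d / n)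
      ≤ ((∑' i, ((c i).2 : ℝ≥0∞) ^ d) ^ ((n : ℝ) / d)) ^ (d / n) := by
        gcongr
        exact ENNReal.div_le_of_le_mul (hvol.trans (by gcongr))
    _ = ∑' i, ((c i).2 : ℝ≥0∞) ^ d := by
        rw [← ENNReal.rpow_mul, div_mul_div_cancel₀ hd.ne', div_self hn.ne', ENNReal.rpow_one]

lemma ofReal_rpow_le_hausdorffContent_ball_diff (hd : 0 < d) (hdn : d ≤ n)
    (x : EuclideanSpace ℝ (Fin n)) {r : ℝ} (hr : 0 ≤ r) :
    ENNReal.ofReal r ^ d ≤ hausdorffContent n d (ball x r \ {x}) := by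
  have hn : (0 : ℝ) < n := hd.trans_le hdn
  have := EuclideanSpace.nontrivial_of_pos (Nat.cast_pos.mp hn)
  refine le_of_eq_of_le ?_ (rpow_volume_div_le_hausdorffContent hd hdn _)
  rw [measure_sdiff_null (measure_singleton x), Measure.addHaar_ball _ _ hr,
    finrank_euclideanSpace_fin, ENNReal.mul_div_cancel_right (measure_ball_pos _ _ one_pos).ne'
      measure_ball_lt_top.ne, ENNReal.ofReal_pow hr, ← ENNReal.rpow_natCast, ← ENNReal.rpow_mul,
    mul_div_cancel₀ _ hn.ne']

end HausdorffContent

section Lorentz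

variable {X : Type*} {μC : Set X → ℝ≥0∞} {E : Set X} {f : X → ℝ≥0∞} {p q : ℝ}

lemma lorNorm_eq_top_of_le_distribution {c : ℝ} (hp : 0 < p) (hq : 0 < q) (hc : 0 < c)
    (h : ∀ t, 1 < t → ENNReal.ofReal (c * t ^ (-p)) ≤ μC {x ∈ E | ENNReal.ofReal t < f x}) :
    lorNorm μC p q E f = ⊤ := by
  have hlower : ∀ t ∈ Ioi (1:ℝ), ENNReal.ofReal (c ^ (q / p) * t⁻¹) ≤
      ENNReal.ofReal (t ^ q) * μC {x ∈ E | ENNReal.ofReal t < f x} ^ (q / p)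
        * ENNReal.ofReal t⁻¹ := by
    intro t ht
    have ht0 : 0 < t := one_pos.trans ht
    calc ENNReal.ofReal (c ^ (q / p) * t⁻¹)
        = ENNReal.ofReal (t ^ q) * ENNReal.ofReal (c * t ^ (-p)) ^ (q / p)
            * ENNReal.ofReal t⁻¹ := by
          rw [ENNReal.ofReal_rpow_of_nonneg (by positivity) (by positivity),
            ← ENNReal.ofReal_mul (by positivity), ← ENNReal.ofReal_mul (by positivity),
            Real.mul_rpow hc.le (by positivity), ← Real.rpow_mul ht0.le,
            show -p * (q / p) = -q by field_simp, Real.rpow_neg ht0.le]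
          field_simp
      _ ≤ _ := by gcongr; exact h t ht
  have hdiverge : ∫⁻ t in Ioi (1:ℝ), ENNReal.ofReal (c ^ (q / p) * t⁻¹) = ⊤ := by
    by_contra hfin
    refine not_integrableOn_Ioi_inv ((((lintegral_ofReal_ne_top_iff_integrable
      (by fun_prop) ?_).mp hfin).const_mul (c ^ (q / p))⁻¹).congr ?_)
    · filter_upwards [ae_restrict_mem measurableSet_Ioi] with t ht
      have : (0:ℝ) < t := one_pos.trans ht
      positivity
    · filter_upwards with t
      field_simp
  have hI : ∫⁻ t in Ioi (0:ℝ), ENNReal.ofReal (t ^ q)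
      * μC {x ∈ E | ENNReal.ofReal t < f x} ^ (q / p) * ENNReal.ofReal t⁻¹ = ⊤ :=
    eq_top_iff.mpr <| hdiverge.symm.le.trans <|
      (setLIntegral_mono' measurableSet_Ioi hlower).trans
        (lintegral_mono_set (Ioi_subset_Ioi zero_le_one))
  rw [lorNorm, hI, ENNReal.mul_top (ENNReal.ofReal_pos.mpr hp).ne',
    ENNReal.top_rpow_of_pos (by positivity)]

lemma lorNorm_lt_top_of_distribution_le {r : ℝ} {M C : ℝ≥0∞} (hp : 0 < p) (hq : 0 < q)
    (hpr : p < r) (hM : M ≠ ⊤) (hC : C ≠ ⊤)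
    (hbdd : ∀ t, μC {x ∈ E | ENNReal.ofReal t < f x} ≤ M)
    (hdecay : ∀ t, 1 < t →
      μC {x ∈ E | ENNReal.ofReal t < f x} ≤ C * ENNReal.ofReal (t ^ (-r))) :
    lorNorm μC p q E f < ⊤ := by
  set g : ℝ → ℝ≥0∞ := fun t => ENNReal.ofReal (t ^ q)
    * μC {x ∈ E | ENNReal.ofReal t < f x} ^ (q / p) * ENNReal.ofReal t⁻¹
  have hqp : 0 ≤ q / p := by positivity
  have hsmall : ∀ t ∈ Ioc (0:ℝ) 1, g t ≤ M ^ (q / p) * ENNReal.ofReal (t ^ (q - 1)) := by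
    rintro t ⟨ht0, -⟩
    calc g t ≤ ENNReal.ofReal (t ^ q) * M ^ (q / p) * ENNReal.ofReal t⁻¹ := by
          dsimp only [g]; gcongr; exact hbdd t
      _ = M ^ (q / p) * ENNReal.ofReal (t ^ (q - 1)) := by
          rw [mul_comm (ENNReal.ofReal _), mul_assoc, ← ENNReal.ofReal_mul (by positivity),
            Real.rpow_sub_one ht0.ne', div_eq_mul_inv (t ^ q)]
  have hlarge : ∀ t ∈ Ioi (1:ℝ),
      g t ≤ C ^ (q / p) * ENNReal.ofReal (t ^ (q - r * (q / p) - 1)) := by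
    intro t ht
    have ht0 : 0 < t := one_pos.trans ht
    calc g t ≤ ENNReal.ofReal (t ^ q) * (C * ENNReal.ofReal (t ^ (-r))) ^ (q / p)
          * ENNReal.ofReal t⁻¹ := by
          dsimp only [g]; gcongr; exact hdecay t ht
      _ = C ^ (q / p) * ENNReal.ofReal (t ^ (q - r * (q / p) - 1)) := by
          rw [ENNReal.mul_rpow_of_nonneg _ _ hqp,
            ENNReal.ofReal_rpow_of_nonneg (by positivity) hqp, mul_comm (ENNReal.ofReal _),
            mul_assoc, mul_assoc, ← ENNReal.ofReal_mul (by positivity),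
            ← ENNReal.ofReal_mul (by positivity), ← Real.rpow_mul ht0.le, ← Real.rpow_neg_one,
            ← Real.rpow_add ht0, ← Real.rpow_add ht0]
          ring_nf
  have hint_small : ∫⁻ t in Ioc (0:ℝ) 1, g t < ⊤ := by
    refine (setLIntegral_mono' measurableSet_Ioc hsmall).trans_lt ?_
    rw [lintegral_const_mul' _ _ (ENNReal.rpow_ne_top_of_nonneg hqp hM)]
    refine ENNReal.mul_lt_top (ENNReal.rpow_lt_top_of_nonneg hqp hM) ?_
    refine IntegrableOn.setLIntegral_lt_top ?_
    rw [integrableOn_Ioc_iff_integrableOn_Ioo]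
    exact (intervalIntegral.integrableOn_Ioo_rpow_iff one_pos).mpr (by linarith)
  have hint_large : ∫⁻ t in Ioi (1:ℝ), g t < ⊤ := by
    refine (setLIntegral_mono' measurableSet_Ioi hlarge).trans_lt ?_
    rw [lintegral_const_mul' _ _ (ENNReal.rpow_ne_top_of_nonneg hqp hC)]
    refine ENNReal.mul_lt_top (ENNReal.rpow_lt_top_of_nonneg hqp hC) ?_
    refine IntegrableOn.setLIntegral_lt_top ?_
    refine (integrableOn_Ioi_rpow_iff one_pos).mpr ?_
    have : q < r * (q / p) := by
      rw [mul_div_assoc', lt_div_iff₀ hp]; nlinarith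
    linarith
  rw [lorNorm, ← Ioc_union_Ioi_eq_Ioi zero_le_one,
    lintegral_union measurableSet_Ioi (Ioc_disjoint_Ioi le_rfl)]
  exact ENNReal.rpow_lt_top_of_nonneg (by positivity) (ENNReal.mul_ne_top ENNReal.ofReal_ne_top
    (ENNReal.add_lt_top.mpr ⟨hint_small, hint_large⟩).ne)

end Lorentz

section PowerOfNorm

variable {E : Type*} [NormedAddCommGroup E]

lemma ball_diff_subset_setOf_lt_norm_rpow_sub {η b t : ℝ} (hη : η < 0) (ht : 1 ≤ t) :
    ball (0 : E) ((t + |b|) ^ η⁻¹) \ {0} ⊆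
      {x ∈ ball (0 : E) 1 \ {0} | ENNReal.ofReal t < ofRealFun (fun x => ‖x‖ ^ η - b) x} := by
  rintro x ⟨hxρ, hx0⟩
  have hx : 0 < ‖x‖ := norm_pos_iff.mpr hx0
  rw [mem_ball_zero_iff] at hxρ
  have hbase : 1 ≤ t + |b| := by linarith [abs_nonneg b]
  refine ⟨⟨mem_ball_zero_iff.mpr (hxρ.trans_le ?_), hx0⟩, ?_⟩
  · exact Real.rpow_le_one_of_one_le_of_nonpos hbase (inv_nonpos.mpr hη.le)
  · rw [Real.lt_rpow_inv_iff_of_neg hx (by linarith) hη] at hxρ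
    rw [ofRealFun, ENNReal.ofReal_lt_ofReal_iff_of_nonneg (by linarith)]
    linarith [le_abs_self b, le_abs_self (‖x‖ ^ η - b)]

variable [InnerProductSpace ℝ E] [CompleteSpace E]

lemma norm_gradient_norm_rpow (η : ℝ) {x : E} (hx : x ≠ 0) :
    ‖gradient (fun y : E => ‖y‖ ^ η) x‖ = |η| * ‖x‖ ^ (η - 1) := by
  have : Nontrivial E := ⟨⟨x, 0, hx⟩⟩
  have hnorm : DifferentiableAt ℝ (‖·‖) x := (contDiffAt_norm ℝ hx).differentiableAt one_ne_zero
  rw [gradient, LinearIsometryEquiv.norm_map,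
    (hnorm.hasFDerivAt.rpow_const (Or.inl (norm_ne_zero_iff.mpr hx))).fderiv, norm_smul,
    norm_fderiv_norm hnorm, mul_one, Real.norm_eq_abs, abs_mul,
    abs_of_nonneg (Real.rpow_nonneg (norm_nonneg x) _)]

lemma setOf_lt_norm_gradient_norm_rpow_subset_ball {η t : ℝ} (hη0 : η ≠ 0) (hη1 : η < 1)
    (ht : 0 < t) (Ω : Set E) :
    {x ∈ Ω \ {0} | ENNReal.ofReal t < ENNReal.ofReal ‖gradient (fun y : E => ‖y‖ ^ η) x‖} ⊆
      ball 0 ((t / |η|) ^ (η - 1)⁻¹) := by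
  rintro x ⟨⟨-, hx0⟩, hlt⟩
  have hx : 0 < ‖x‖ := norm_pos_iff.mpr hx0
  have hη : 0 < |η| := abs_pos.mpr hη0
  rw [ENNReal.ofReal_lt_ofReal_iff_of_nonneg ht.le, norm_gradient_norm_rpow η hx0,
    ← div_lt_iff₀' hη] at hlt
  rw [mem_ball_zero_iff, Real.lt_rpow_inv_iff_of_neg hx (by positivity) (by linarith)]
  exact hlt

end PowerOfNorm

section EuclideanPowerOfNorm

variable {n : ℕ}

lemma lorNorm_norm_rpow_sub_eq_top {d s q η : ℝ} (hd : 0 < d) (hdn : d ≤ n) (hs : 0 < s)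
    (hq : 0 < q) (hη : η ≤ -d / s) (b : ℝ) :
    lorNorm (hausdorffContent n d) s q (ball (0 : EuclideanSpace ℝ (Fin n)) 1 \ {0})
      (ofRealFun fun x => ‖x‖ ^ η - b) = ⊤ := by
  have hη0 : η < 0 := hη.trans_lt (div_neg_of_neg_of_pos (neg_neg_of_pos hd) hs)
  have hds : -s ≤ η⁻¹ * d := by
    rw [inv_mul_eq_div, le_div_iff_of_neg hη0]
    rw [le_div_iff₀ hs] at hη
    linarith
  refine lorNorm_eq_top_of_le_distribution hs hq (c := (1 + |b|) ^ (-s)) (by positivity)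
    fun t ht => ?_
  have ht0 : 0 < t := one_pos.trans ht
  have hbase : 1 ≤ t + |b| := by linarith [abs_nonneg b]
  refine le_trans ?_ ((ofReal_rpow_le_hausdorffContent_ball_diff hd hdn 0 (by positivity)).trans
    (hausdorffContent_mono (ball_diff_subset_setOf_lt_norm_rpow_sub hη0 ht.le)))
  rw [ENNReal.ofReal_rpow_of_nonneg (by positivity) hd.le, ← Real.rpow_mul (by positivity),
    ← Real.mul_rpow (by positivity) ht0.le]
  refine ENNReal.ofReal_le_ofReal ?_
  calc ((1 + |b|) * t) ^ (-s) ≤ (t + |b|) ^ (-s) :=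
        Real.rpow_le_rpow_of_nonpos (by positivity) (by nlinarith [abs_nonneg b]) (by linarith)
    _ ≤ (t + |b|) ^ (η⁻¹ * d) := Real.rpow_le_rpow_of_exponent_le hbase hds

lemma lorNorm_norm_gradient_norm_rpow_lt_top {δ p q η : ℝ} (hδ : 0 < δ) (hp : 0 < p)
    (hq : 0 < q) (hη0 : η ≠ 0) (hη1 : η < 1) (hηδ : 1 - δ / p < η) :
    lorNorm (hausdorffContent n δ) p q (ball (0 : EuclideanSpace ℝ (Fin n)) 1 \ {0})
      (fun x => ENNReal.ofReal
        ‖gradient (fun y : EuclideanSpace ℝ (Fin n) => ‖y‖ ^ η) x‖) < ⊤ := by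
  have hη : 0 < |η| := abs_pos.mpr hη0
  set r := δ / (1 - η) with hr
  have hpr : p < r := by
    have := sub_lt_comm.mp hηδ
    rw [lt_div_iff₀ hp] at this
    rw [hr, lt_div_iff₀ (by linarith)]
    linarith
  refine lorNorm_lt_top_of_distribution_le hp hq hpr (M := 1) (C := ENNReal.ofReal (|η| ^ r))
    ENNReal.one_ne_top ENNReal.ofReal_ne_top (fun t => ?_) (fun t ht => ?_)
  · refine (hausdorffContent_le_of_subset_ball hδ fun x hx => hx.1.1).trans_eq ?_
    rw [ENNReal.ofReal_one, ENNReal.one_rpow]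
  · have ht0 : 0 < t := one_pos.trans ht
    refine (hausdorffContent_le_of_subset_ball hδ
      (setOf_lt_norm_gradient_norm_rpow_subset_ball hη0 hη1 ht0 _)).trans_eq ?_
    rw [ENNReal.ofReal_rpow_of_nonneg (by positivity) hδ.le, ← ENNReal.ofReal_mul (by positivity),
      ← Real.rpow_mul (by positivity), Real.div_rpow ht0.le hη.le,
      show (η - 1)⁻¹ * δ = -r by rw [hr, inv_mul_eq_div, ← div_neg, neg_sub],
      Real.rpow_neg hη.le, div_inv_eq_mul, mul_comm]

end EuclideanPowerOfNorm

theorem poincare_sobolev_exponent_sharp_general (n : ℕ) (δ μ p s : ℝ)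
    (hδ0 : 0 < δ) (hδn : δ ≤ n) (hμ0 : 0 ≤ μ) (hμ1 : μ < 1)
    (hp1 : δ / n < p) (hp2 : p < δ)
    (hs : p * (δ - μ * p) / (δ - p) < s) :
    1 - δ / p < -(δ - μ * p) / s ∧
    ∀ η : ℝ, 1 - δ / p < η → η ≤ -(δ - μ * p) / s →
      ContDiffOn ℝ 1 (fun x : EuclideanSpace ℝ (Fin n) => ‖x‖ ^ η)
        (Metric.ball 0 1 \ {0}) ∧
      (∀ b : ℝ, ∀ q : ℝ, 0 < q →
        lorNorm (hausdorffContent n (δ - μ * p)) s q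
          (Metric.ball (0 : EuclideanSpace ℝ (Fin n)) 1 \ {0})
          (ofRealFun fun x => ‖x‖ ^ η - b) = ⊤) ∧
      (∀ qt : ℝ, 0 < qt →
        lorNorm (hausdorffContent n δ) p qt
          (Metric.ball (0 : EuclideanSpace ℝ (Fin n)) 1 \ {0})
          (fun x => ENNReal.ofReal
            ‖gradient (fun y : EuclideanSpace ℝ (Fin n) => ‖y‖ ^ η) x‖) < ⊤) := by
  have hp : 0 < p := (div_pos hδ0 (hδ0.trans_le hδn)).trans hp1
  have hd : 0 < δ - μ * p := by nlinarith
  have hdn : δ - μ * p ≤ n := by nlinarith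
  rw [div_lt_iff₀ (by linarith)] at hs
  have hs0 : 0 < s := by nlinarith
  have hexp : 1 - δ / p < -(δ - μ * p) / s := by
    rw [show 1 - δ / p = (p - δ) / p by field_simp, div_lt_div_iff₀ hp hs0]
    linarith
  refine ⟨hexp, fun η hη1 hη2 => ?_⟩
  have hη0 : η < 0 := hη2.trans_lt (div_neg_of_neg_of_pos (neg_neg_of_pos hd) hs0)
  refine ⟨fun x hx => ?_, fun b q hq => ?_, fun qt hqt => ?_⟩
  · have hx0 : x ≠ 0 := hx.2
    exact ((contDiffAt_norm ℝ hx0).rpow_const_of_ne (norm_ne_zero_iff.mpr hx0)).contDiffWithinAt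
  · exact lorNorm_norm_rpow_sub_eq_top hd hdn hs0 hq hη2 b
  · exact lorNorm_norm_gradient_norm_rpow_lt_top hδ0 hp hqt hη0.ne (by linarith) hη1

/-- Sharpness of the exponent `p(δ-μp)/(δ-p)` in the Poincaré–Sobolev inequality:
on `Ω = B(0,1) \ {0}`, for any larger exponent `s`, the function `u₀(x) = |x|^η`
(for suitable `η`) is `C¹` on `Ω`, has all `L^{s,q}(Ω, H_∞^{δ-μp})` distances to constants
infinite, yet `‖∇u₀‖_{L^{p,q̃}(Ω, H_∞^δ)}` is finite. -/
theorem poincare_sobolev_exponent_sharp (n : ℕ) (hn : 2 ≤ n) (δ μ p s : ℝ)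
    (hδ0 : 0 < δ) (hδn : δ ≤ n) (hμ0 : 0 ≤ μ) (hμ1 : μ < 1)
    (hp1 : δ / n < p) (hp2 : p < δ)
    (hs : p * (δ - μ * p) / (δ - p) < s) :
    1 - δ / p < -(δ - μ * p) / s ∧
    ∀ η : ℝ, 1 - δ / p < η → η ≤ -(δ - μ * p) / s →
      ContDiffOn ℝ 1 (fun x : EuclideanSpace ℝ (Fin n) => ‖x‖ ^ η)
        (Metric.ball 0 1 \ {0}) ∧
      (∀ b : ℝ, ∀ q : ℝ, 0 < q →
        lorNorm (hausdorffContent n (δ - μ * p)) s q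
          (Metric.ball (0 : EuclideanSpace ℝ (Fin n)) 1 \ {0})
          (ofRealFun fun x => ‖x‖ ^ η - b) = ⊤) ∧
      (∀ qt : ℝ, 0 < qt →
        lorNorm (hausdorffContent n δ) p qt
          (Metric.ball (0 : EuclideanSpace ℝ (Fin n)) 1 \ {0})
          (fun x => ENNReal.ofReal
            ‖gradient (fun y : EuclideanSpace ℝ (Fin n) => ‖y‖ ^ η) x‖) < ⊤) :=
  poincare_sobolev_exponent_sharp_general n δ μ p s hδ0 hδn hμ0 hμ1 hp1 hp2 hs
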